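/- arXiv:2112.04250 — 6 statements merged into one kernel-verified Lean document; each statement's English description precedes it below -/
import Mathlib

section
/- Every element x ∈ R not in the center C satisfies a quadratic equation a*x^2 + b*x + c = 0 with a, b, c ∈ C and a ≠ 0 ≠ c. Explicitly, with v a nonzero commutator (x,y), one may take a = v^2, b = v^2 + (v*x)^2 - (v + v*x)^2, c = (v*x)^2. -/
/-- Every `x ∉ C` satisfies a quadratic equation `a*x^2 + b*x + c = 0` with
`a, b, c ∈ C`, `a ≠ 0 ≠ c`, where `a = v^2`, `b = v^2 + (v*x)^2 - (v + v*x)^2`,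
`c = (v*x)^2` for a nonzero commutator `v = (x,y)`. -/
theorem stmt_3 {R : Type*} [Ring R]
    (hnc : ∃ a b : R, a * b ≠ b * a)
    (hcomm : ∀ a b : R, a * b - b * a ≠ 0 → ∀ r : R, r ≠ 0 →
      (a * b - b * a) * r ≠ 0 ∧ r * (a * b - b * a) ≠ 0)
    (hsq : ∀ a b : R, (a * b - b * a) ^ 2 ∈ Subring.center R)
    (x : R) (hx : x ∉ Subring.center R)
    (y : R) (hv : x * y - y * x ≠ 0) :
    (x * y - y * x) ^ 2 * x ^ 2
      + ((x * y - y * x) ^ 2 + ((x * y - y * x) * x) ^ 2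
          - ((x * y - y * x) + (x * y - y * x) * x) ^ 2) * x
      + ((x * y - y * x) * x) ^ 2 = 0 ∧
    (x * y - y * x) ^ 2 ∈ Subring.center R ∧
    ((x * y - y * x) ^ 2 + ((x * y - y * x) * x) ^ 2
        - ((x * y - y * x) + (x * y - y * x) * x) ^ 2) ∈ Subring.center R ∧
    ((x * y - y * x) * x) ^ 2 ∈ Subring.center R ∧
    (x * y - y * x) ^ 2 ≠ 0 ∧ ((x * y - y * x) * x) ^ 2 ≠ 0 := by
  have hx0 : x ≠ 0 := by
    rintro rfl
    exact hx (Subring.zero_mem _)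
  -- v*x is the commutator (x, y*x)
  have hvx_comm : (x * y - y * x) * x = x * (y * x) - (y * x) * x := by noncomm_ring
  -- v + v*x is the commutator (x, y + y*x)
  have hvvx_comm : (x * y - y * x) + (x * y - y * x) * x
      = x * (y + y * x) - (y + y * x) * x := by noncomm_ring
  have ha : (x * y - y * x) ^ 2 ∈ Subring.center R := hsq x y
  have hc : ((x * y - y * x) * x) ^ 2 ∈ Subring.center R := by
    rw [hvx_comm]; exact hsq x (y * x)
  have hb : ((x * y - y * x) ^ 2 + ((x * y - y * x) * x) ^ 2
      - ((x * y - y * x) + (x * y - y * x) * x) ^ 2) ∈ Subring.center R := by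
    refine Subring.sub_mem _ (Subring.add_mem _ ha hc) ?_
    rw [hvvx_comm]; exact hsq x (y + y * x)
  have hvx0 : (x * y - y * x) * x ≠ 0 := (hcomm x y hv x hx0).1
  have ha0 : (x * y - y * x) ^ 2 ≠ 0 := by
    rw [sq]; exact (hcomm x y hv _ hv).1
  have hc0 : ((x * y - y * x) * x) ^ 2 ≠ 0 := by
    rw [sq, hvx_comm]
    refine (hcomm x (y * x) ?_ _ ?_).1 <;> rw [← hvx_comm] <;> exact hvx0
  exact ⟨by noncomm_ring, ha, hb, hc, ha0, hc0⟩
end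

section
/- R contains no zero divisors: if x*y = 0 with x, y ∈ R then x = 0 or y = 0. -/
/-- `R` contains no zero divisors: if `x*y = 0` then `x = 0` or `y = 0`. -/
theorem stmt_4 {R : Type*} [Ring R]
    (hnc : ∃ a b : R, a * b ≠ b * a)
    (hcomm : ∀ a b : R, a * b - b * a ≠ 0 → ∀ r : R, r ≠ 0 →
      (a * b - b * a) * r ≠ 0 ∧ r * (a * b - b * a) ≠ 0)
    (hsq : ∀ a b : R, (a * b - b * a) ^ 2 ∈ Subring.center R) :
    ∀ x y : R, x * y = 0 → x = 0 ∨ y = 0 := by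
  intro x y hxy
  by_contra h
  push_neg at h
  obtain ⟨hx, hy⟩ := h
  obtain ⟨a, b, hab⟩ := hnc
  have hw : a * b - b * a ≠ 0 := sub_ne_zero.mpr hab
  -- Step 1: y * x = 0
  have hyx : y * x = 0 := by
    by_contra hyx
    have hveq : x * y - y * x = -(y * x) := by rw [hxy, zero_sub]
    have hv : x * y - y * x ≠ 0 := by rw [hveq]; exact neg_ne_zero.mpr hyx
    have h2 := (hcomm x y hv (x * y - y * x) hv).1
    apply h2
    rw [hveq, neg_mul_neg, show y * x * (y * x) = y * (x * y) * x by noncomm_ring,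
      hxy, mul_zero, zero_mul]
  -- Step 2: x * r * y = 0 for all r
  have step2 : ∀ r : R, x * r * y = 0 := by
    intro r
    by_contra hne
    have hveq : x * (r * y) - (r * y) * x = x * r * y := by
      rw [mul_assoc r y x, hyx, mul_zero, sub_zero, mul_assoc]
    have hv : x * (r * y) - (r * y) * x ≠ 0 := by rw [hveq]; exact hne
    have h2 := (hcomm x (r * y) hv x hx).1
    apply h2
    rw [hveq, mul_assoc, mul_assoc, hyx, mul_zero, mul_zero]
  -- Step 3: x commutes with b
  have hxb : x * b = b * x := by
    by_contra hne
    have hv : x * b - b * x ≠ 0 := sub_ne_zero.mpr hne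
    have h2 := (hcomm x b hv y hy).1
    apply h2
    rw [sub_mul, step2 b, mul_assoc, hxy, mul_zero, sub_zero]
  -- Final: x * (a*b - b*a) is a nonzero commutator killed by y
  have hueq : x * a * b - b * (x * a) = x * (a * b - b * a) := by
    rw [show b * (x * a) = x * b * a by rw [hxb]; noncomm_ring]
    noncomm_ring
  have hune : x * a * b - b * (x * a) ≠ 0 := by
    rw [hueq]; exact (hcomm a b hw x hx).2
  have h2 := (hcomm (x * a) b hune y hy).1
  apply h2
  rw [hueq, mul_sub, sub_mul,
    show x * (a * b) * y = x * (a * b) * y from rfl]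
  rw [show x * (a * b) = x * (a * b) from rfl]
  have e1 : x * (a * b) * y = 0 := step2 (a * b)
  have e2 : x * (b * a) * y = 0 := step2 (b * a)
  rw [e1, e2, sub_zero]
end

section
/- With notation as above, if additionally p^2 ∈ C, then m = p - Σ_i (d_i/(2 u_i^2)) u_i satisfies m^2 ∈ C. -/
/-- With notation as in the anticommuting-correction lemma, if additionally
`p^2 ∈ C`, then `m = p - Σ_i (d_i/(2 u_i^2)) u_i` satisfies `m^2 ∈ C`. -/
theorem stmt_11 {R : Type*} [Ring R]
    (hC : IsField (Subring.center R)) (h2 : (2 : R) ≠ 0)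
    (hnzd : ∀ x y : R, x * y = 0 → x = 0 ∨ y = 0)
    (n : ℕ) (u : Fin n → R)
    (hu : ∀ i, u i ∉ Subring.center R)
    (husq : ∀ i, (u i) ^ 2 ∈ Subring.center R)
    (husq_ne : ∀ i, (u i) ^ 2 ≠ 0)
    (hanti : ∀ i j, i ≠ j → u i * u j = -(u j * u i))
    (p : R) (hp : p ^ 2 ∈ Subring.center R)
    (d : Fin n → R) (hd : ∀ i, d i ∈ Subring.center R)
    (hpd : ∀ i, p * u i + u i * p = d i)
    (e : Fin n → R) (he : ∀ i, e i ∈ Subring.center R)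
    (hdiv : ∀ i, e i * (2 * (u i) ^ 2) = d i) :
    (p - ∑ i, e i * u i) ^ 2 ∈ Subring.center R := by
  have hec : ∀ i (x : R), x * e i = e i * x := fun i x =>
    Subring.mem_center_iff.mp (he i) x
  set s := ∑ i, e i * u i with hs
  -- p*s + s*p = ∑ e i * d i
  have hps : p * s + s * p = ∑ i, e i * d i := by
    rw [hs, Finset.mul_sum, Finset.sum_mul, ← Finset.sum_add_distrib]
    refine Finset.sum_congr rfl fun i _ => ?_
    have h1 : p * (e i * u i) = e i * (p * u i) := by
      rw [← mul_assoc, hec i p, mul_assoc]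
    have h2' : (e i * u i) * p = e i * (u i * p) := by rw [mul_assoc]
    rw [h1, h2', ← mul_add, hpd i]
  -- s*s = ∑ e i * e i * u i ^ 2
  have hcross : ∀ i j : Fin n, (e i * u i) * (e j * u j) = e i * e j * (u i * u j) := by
    intro i j
    calc (e i * u i) * (e j * u j) = e i * ((u i * e j) * u j) := by
          rw [mul_assoc, mul_assoc]
      _ = e i * (e j * (u i * u j)) := by rw [hec j (u i), mul_assoc]
      _ = e i * e j * (u i * u j) := by rw [mul_assoc]
  have hss : s * s = ∑ i, e i * e i * (u i) ^ 2 := by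
    rw [hs, Finset.sum_mul_sum]
    have hsum : ∑ i, ∑ j, (e i * u i) * (e j * u j)
        = ∑ x ∈ (Finset.univ ×ˢ Finset.univ : Finset (Fin n × Fin n)),
            (e x.1 * u x.1) * (e x.2 * u x.2) := by
      rw [Finset.sum_product]
    rw [hsum, ← Finset.diag_union_offDiag (Finset.univ : Finset (Fin n)),
      Finset.sum_union (Finset.disjoint_diag_offDiag _), Finset.sum_diag]
    have hoff : ∑ x ∈ (Finset.univ : Finset (Fin n)).offDiag,
        (e x.1 * u x.1) * (e x.2 * u x.2) = 0 := by
      refine Finset.sum_involution (fun x _ => Prod.swap x) ?_ ?_ ?_ ?_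
      · intro x hx
        have hne : x.1 ≠ x.2 := (Finset.mem_offDiag.mp hx).2.2
        simp only [Prod.fst_swap, Prod.snd_swap]
        rw [hcross, hcross]
        rw [hanti x.2 x.1 hne.symm]
        have hee : e x.2 * e x.1 = e x.1 * e x.2 := (hec x.2 (e x.1)).symm
        simp [hee, mul_neg]
      · intro x hx _
        have hne : x.1 ≠ x.2 := (Finset.mem_offDiag.mp hx).2.2
        intro hcontra
        exact hne (congrArg Prod.fst hcontra).symm
      · intro x hx
        have h := Finset.mem_offDiag.mp hx
        exact Finset.mem_offDiag.mpr ⟨h.2.1, h.1, h.2.2.symm⟩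
      · intro x hx; rfl
    rw [hoff, add_zero]
    refine Finset.sum_congr rfl fun i _ => ?_
    rw [hcross, sq]
  have hm : (p - s) ^ 2 = p ^ 2 - (∑ i, e i * d i) + ∑ i, e i * e i * (u i) ^ 2 := by
    rw [← hps, ← hss]; noncomm_ring
  rw [hm]
  exact Subring.add_mem _
    (Subring.sub_mem _ hp (Subring.sum_mem _ fun i _ => Subring.mul_mem _ (he i) (hd i)))
    (Subring.sum_mem _ fun i _ => Subring.mul_mem _ (Subring.mul_mem _ (he i) (he i)) (husq i))
end

section
/- Let u ∉ C with u^2 ∈ C and p ∉ C + C*u with p^2 ∈ C. If both p+u and p-u satisfy monic quadratic equations over C ((p±u)^2 = c(p±u) + c' with coefficients in C), then p*u + u*p ∈ C. -/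
lemma central_inv {R : Type*} [Ring R] (hC : IsField (Subring.center R))
    {a : R} (ha : a ∈ Subring.center R) (h0 : a ≠ 0) :
    ∃ b ∈ Subring.center R, a * b = 1 ∧ b * a = 1 := by
  obtain ⟨b, hb⟩ := hC.mul_inv_cancel (a := (⟨a, ha⟩ : Subring.center R))
    (fun h => h0 (by simpa using congrArg Subtype.val h))
  have hab : a * (b : R) = 1 := congrArg Subtype.val hb
  have hcomm : a * (b : R) = (b : R) * a := (Subring.mem_center_iff.mp b.2) a
  exact ⟨b, b.2, hab, hcomm ▸ hab⟩

/-- Let `u ∉ C` with `u^2 ∈ C`, and `p ∉ C + C*u` with `p^2 ∈ C`. If both `p+u`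
and `p-u` satisfy monic quadratic equations over `C`, then `p*u + u*p ∈ C`. -/
theorem stmt_12 {R : Type*} [Ring R]
    (hC : IsField (Subring.center R)) (h2 : (2 : R) ≠ 0)
    (hnzd : ∀ x y : R, x * y = 0 → x = 0 ∨ y = 0)
    (u : R) (hu : u ∉ Subring.center R) (husq : u ^ 2 ∈ Subring.center R)
    (p : R)
    (hp : ¬∃ c₀ c₁ : R, c₀ ∈ Subring.center R ∧ c₁ ∈ Subring.center R ∧
      p = c₀ + c₁ * u)
    (hpsq : p ^ 2 ∈ Subring.center R)
    (hplus : ∃ c₁ c₂ : R, c₁ ∈ Subring.center R ∧ c₂ ∈ Subring.center R ∧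
      (p + u) ^ 2 = c₁ * (p + u) + c₂)
    (hminus : ∃ c₃ c₄ : R, c₃ ∈ Subring.center R ∧ c₄ ∈ Subring.center R ∧
      (p - u) ^ 2 = c₃ * (p - u) + c₄) :
    p * u + u * p ∈ Subring.center R := by
  obtain ⟨c₁, c₂, hc₁, hc₂, hpe⟩ := hplus
  obtain ⟨c₃, c₄, hc₃, hc₄, hme⟩ := hminus
  set A : R := c₂ - p ^ 2 - u ^ 2 with hA
  set B : R := p ^ 2 + u ^ 2 - c₄ with hB
  have hAc : A ∈ Subring.center R := sub_mem (sub_mem hc₂ hpsq) husq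
  have hBc : B ∈ Subring.center R := sub_mem (add_mem hpsq husq) hc₄
  -- e1 : p*u + u*p = c₁*p + c₁*u + A
  have e1 : p * u + u * p = c₁ * p + c₁ * u + A := by
    have h' : (p + u) ^ 2 - (c₁ * (p + u) + c₂) = 0 := sub_eq_zero.mpr hpe
    have h'' : p * u + u * p - (c₁ * p + c₁ * u + A) =
        (p + u) ^ 2 - (c₁ * (p + u) + c₂) := by rw [hA]; noncomm_ring
    rw [h'] at h''
    exact sub_eq_zero.mp h''
  have e2 : p * u + u * p = -(c₃ * p) + c₃ * u + B := by
    have h' : (p - u) ^ 2 - (c₃ * (p - u) + c₄) = 0 := sub_eq_zero.mpr hme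
    have h'' : p * u + u * p - (-(c₃ * p) + c₃ * u + B) =
        -((p - u) ^ 2 - (c₃ * (p - u) + c₄)) := by rw [hB]; noncomm_ring
    rw [h', neg_zero] at h''
    exact sub_eq_zero.mp h''
  -- eqc : (c₁ + c₃) * p = (c₃ - c₁) * u + (B - A)
  have eqc : (c₁ + c₃) * p = (c₃ - c₁) * u + (B - A) := by
    have h' := e1.symm.trans e2
    have h'' : (c₁ + c₃) * p - ((c₃ - c₁) * u + (B - A)) =
        (c₁ * p + c₁ * u + A) - (-(c₃ * p) + c₃ * u + B) := by noncomm_ring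
    rw [h', sub_self] at h''
    exact sub_eq_zero.mp h''
  -- c₁ + c₃ = 0
  have hs : c₁ + c₃ = 0 := by
    by_contra hs0
    obtain ⟨t, htc, hts, hst⟩ := central_inv hC (add_mem hc₁ hc₃) hs0
    apply hp
    refine ⟨t * (B - A), t * (c₃ - c₁), mul_mem htc (sub_mem hBc hAc),
      mul_mem htc (sub_mem hc₃ hc₁), ?_⟩
    calc p = (t * (c₁ + c₃)) * p := by rw [hst, one_mul]
      _ = t * ((c₁ + c₃) * p) := by rw [mul_assoc]
      _ = t * ((c₃ - c₁) * u + (B - A)) := by rw [eqc]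
      _ = t * (B - A) + t * (c₃ - c₁) * u := by noncomm_ring
  have hc31 : c₃ = -c₁ := by
    rw [add_comm] at hs; exact eq_neg_of_add_eq_zero_left hs
  have h0 : (0 : R) = (-c₁ - c₁) * u + (B - A) := by
    rw [hc31, add_neg_cancel, zero_mul] at eqc
    exact eqc
  have key : (2 * c₁) * u = B - A := by
    have h'' : (2 * c₁) * u - (B - A) = -((-c₁ - c₁) * u + (B - A)) := by noncomm_ring
    rw [← h0, neg_zero] at h''
    exact sub_eq_zero.mp h''
  have h2c : (2 : R) ∈ Subring.center R :=
    Subring.mem_center_iff.mpr (fun g => (mul_two g).trans (two_mul g).symm)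
  have hc10 : c₁ = 0 := by
    by_contra hc1
    have h2c1 : (2 * c₁ : R) ≠ 0 := by
      intro h
      rcases hnzd 2 c₁ h with h | h
      · exact h2 h
      · exact hc1 h
    obtain ⟨t, htc, hts, hst⟩ := central_inv hC (mul_mem h2c hc₁) h2c1
    apply hu
    have : u = t * (B - A) := by
      calc u = (t * (2 * c₁)) * u := by rw [hst, one_mul]
        _ = t * ((2 * c₁) * u) := by rw [mul_assoc]
        _ = t * (B - A) := by rw [key]
    rw [this]
    exact mul_mem htc (sub_mem hBc hAc)
  have : p * u + u * p = A := by
    rw [hc10, zero_mul, zero_mul, zero_add, zero_add] at e1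
    exact e1
  rw [this]
  exact hAc
end

section
/- Let R be a noncommutative associative ring with 1 of characteristic ≠ 2 whose center C is a field, with no zero divisors, such that (x,y)^2 ∈ C for all x,y and every nonzero commutator is not a zero divisor. Then R contains nonzero elements a, b with a*b = -b*a, a^2, b^2 ∈ C \ {0}, and Q := C·1 + C·a + C·b + C·(a*b) is a quaternion algebra (in particular a 4-dimensional C-subalgebra which is a division ring). -/
private lemma cswap {R : Type*} [Ring R] {c : R} (hc : c ∈ Subring.center R) (r : R) :
    c * r = r * c := (Subring.mem_center_iff.mp hc r).symm

private lemma quatKey {R : Type*} [Ring R] (x u y v : R) (h : ∀ r, y * r = r * y) :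
    (x*u)*(y*v) = (x*y)*(u*v) := by
  rw [mul_assoc x u (y*v), ← mul_assoc u y v, ← h u, mul_assoc y u v, ← mul_assoc x y (u*v)]

private lemma quatKey2 {R : Type*} [Ring R] (x u y : R) (h : ∀ r, y * r = r * y) :
    (x*u)*y = (x*y)*u := by
  rw [mul_assoc, ← h u, ← mul_assoc]

private lemma quatMul {R : Type*} [Ring R] (a b : R)
    (hba : b * a = -(a * b))
    (hbba : (b*b) * a = a * (b*b))
    (c0 c1 c2 c3 d0 d1 d2 d3 : R)
    (hd0 : ∀ r, d0 * r = r * d0) (hd1 : ∀ r, d1 * r = r * d1)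
    (hd2 : ∀ r, d2 * r = r * d2) (hd3 : ∀ r, d3 * r = r * d3) :
    (c0 + c1*a + c2*b + c3*(a*b)) * (d0 + d1*a + d2*b + d3*(a*b)) =
      (c0*d0 + (c1*d1)*(a*a) + (c2*d2)*(b*b) - (c3*d3)*((a*a)*(b*b)))
      + (c0*d1 + c1*d0 - (c2*d3)*(b*b) + (c3*d2)*(b*b))*a
      + (c0*d2 + (c1*d3)*(a*a) + c2*d0 - (c3*d1)*(a*a))*b
      + (c0*d3 + c1*d2 - c2*d1 + c3*d0)*(a*b) := by
  have pb_ab : b*(a*b) = -((b*b)*a) := by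
    rw [← mul_assoc b a b, hba, neg_mul, mul_assoc a b b, ← hbba]
  have pab_a : (a*b)*a = -((a*a)*b) := by
    rw [mul_assoc a b a, hba, mul_neg, ← mul_assoc]
  have pab_b : (a*b)*b = (b*b)*a := by rw [mul_assoc, ← hbba]
  have pabab : (a*b)*(a*b) = -((a*a)*(b*b)) := by
    rw [mul_assoc a b (a*b), ← mul_assoc b a b, hba, neg_mul, mul_neg, mul_assoc a b b,
      ← mul_assoc a a (b*b)]
  have paab : a*(a*b) = (a*a)*b := (mul_assoc a a b).symm
  have h10 := quatKey2 c1 a d0 hd0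
  have h11 := quatKey c1 a d1 a hd1
  have h12 := quatKey c1 a d2 b hd2
  have h13 := quatKey c1 a d3 (a*b) hd3
  have h20 := quatKey2 c2 b d0 hd0
  have h21 := quatKey c2 b d1 a hd1
  have h22 := quatKey c2 b d2 b hd2
  have h23 := quatKey c2 b d3 (a*b) hd3
  have h30 := quatKey2 c3 (a*b) d0 hd0
  have h31 := quatKey c3 (a*b) d1 a hd1
  have h32 := quatKey c3 (a*b) d2 b hd2
  have h33 := quatKey c3 (a*b) d3 (a*b) hd3
  calc (c0 + c1*a + c2*b + c3*(a*b)) * (d0 + d1*a + d2*b + d3*(a*b))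
      = c0*d0 + c0*(d1*a) + c0*(d2*b) + c0*(d3*(a*b))
        + ((c1*a)*d0 + (c1*a)*(d1*a) + (c1*a)*(d2*b) + (c1*a)*(d3*(a*b)))
        + ((c2*b)*d0 + (c2*b)*(d1*a) + (c2*b)*(d2*b) + (c2*b)*(d3*(a*b)))
        + ((c3*(a*b))*d0 + (c3*(a*b))*(d1*a) + (c3*(a*b))*(d2*b)
            + (c3*(a*b))*(d3*(a*b))) := by noncomm_ring
    _ = _ := by
        rw [h10, h11, h12, h13, h20, h21, h22, h23, h30, h31, h32, h33,
            pabab, pab_a, pab_b, pb_ab, paab, hba]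
        noncomm_ring


/-- `R` contains a quaternion division algebra `Q = C·1 + C·a + C·b + C·(a*b)`. -/
theorem stmt_17 {R : Type*} [Ring R]
    (hnc : ∃ x y : R, x * y ≠ y * x)
    (h2 : (2 : R) ≠ 0)
    (hC : IsField (Subring.center R))
    (hnzd : ∀ x y : R, x * y = 0 → x = 0 ∨ y = 0)
    (hsq : ∀ x y : R, (x * y - y * x) ^ 2 ∈ Subring.center R)
    (hcomm : ∀ x y : R, x * y - y * x ≠ 0 → ∀ r : R, r ≠ 0 →
      (x * y - y * x) * r ≠ 0 ∧ r * (x * y - y * x) ≠ 0) :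
    ∃ a b : R, a ≠ 0 ∧ b ≠ 0 ∧ a * b = -(b * a) ∧
      a ^ 2 ∈ Subring.center R ∧ b ^ 2 ∈ Subring.center R ∧
      a ^ 2 ≠ 0 ∧ b ^ 2 ≠ 0 ∧
      (∀ c₀ c₁ c₂ c₃ : R, c₀ ∈ Subring.center R → c₁ ∈ Subring.center R →
        c₂ ∈ Subring.center R → c₃ ∈ Subring.center R →
        c₀ + c₁ * a + c₂ * b + c₃ * (a * b) = 0 →
        c₀ = 0 ∧ c₁ = 0 ∧ c₂ = 0 ∧ c₃ = 0) ∧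
      (let Q : Set R := {z | ∃ c₀ c₁ c₂ c₃ : R, c₀ ∈ Subring.center R ∧
        c₁ ∈ Subring.center R ∧ c₂ ∈ Subring.center R ∧ c₃ ∈ Subring.center R ∧
        z = c₀ + c₁ * a + c₂ * b + c₃ * (a * b)}
      (∀ q ∈ Q, ∀ q' ∈ Q, q * q' ∈ Q) ∧
      (1 : R) ∈ Q ∧
      ∀ q ∈ Q, q ≠ 0 → ∃ q' ∈ Q, q * q' = 1 ∧ q' * q = 1) := by
  classical
  obtain ⟨x, y, hxy⟩ := hnc
  have h2C : (2:R) ∈ Subring.center R :=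
    Subring.mem_center_iff.mpr (fun g => by rw [mul_two, two_mul])
  have hinv : ∀ N : R, N ∈ Subring.center R → N ≠ 0 →
      ∃ t : R, t ∈ Subring.center R ∧ N * t = 1 := by
    intro N hN hNe
    obtain ⟨t, ht⟩ := hC.mul_inv_cancel (a := ⟨N, hN⟩)
      (fun h => hNe (congrArg Subtype.val h))
    exact ⟨t.1, t.2, congrArg Subtype.val ht⟩
  -- squares of elements with nonzero central commutator are central
  have hsquare : ∀ z w : R, z*w - w*z ≠ 0 → z*w - w*z ∈ Subring.center R →
      z*z ∈ Subring.center R := by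
    intro z w hne hcen
    have hc2C : (z*w - w*z)*(z*w - w*z) ∈ Subring.center R := by
      have := hsq z w; rwa [pow_two] at this
    have hc2ne : (z*w - w*z)*(z*w - w*z) ≠ 0 := fun h => by
      rcases hnzd _ _ h with h|h <;> exact hne h
    have h4 := hsq (z*z) w
    rw [pow_two] at h4
    have e2 : (z*w - w*z)*z = z*(z*w - w*z) := cswap hcen z
    have e3 : ((z*z)*w - w*(z*z)) * ((z*z)*w - w*(z*z))
        = (((2:R)*2)*((z*w-w*z)*(z*w-w*z))) * (z*z) := by
      have e1 : (z*z)*w - w*(z*z) = z*(z*w-w*z) + (z*w-w*z)*z := by noncomm_ring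
      rw [e1, e2]
      calc (z*(z*w-w*z) + z*(z*w-w*z)) * (z*(z*w-w*z) + z*(z*w-w*z))
          = ((2:R)*2)*((z*((z*w-w*z)*z))*(z*w-w*z)) := by noncomm_ring
        _ = ((2:R)*2)*((z*(z*(z*w-w*z)))*(z*w-w*z)) := by rw [e2]
        _ = ((2:R)*2)*((z*z)*((z*w-w*z)*(z*w-w*z))) := by noncomm_ring
        _ = ((2:R)*2)*(((z*w-w*z)*(z*w-w*z))*(z*z)) := by
              rw [cswap hc2C (z*z)]
        _ = (((2:R)*2)*((z*w-w*z)*(z*w-w*z)))*(z*z) := by noncomm_ring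
    have hD : ((2:R)*2)*((z*w-w*z)*(z*w-w*z)) ∈ Subring.center R :=
      mul_mem (mul_mem h2C h2C) hc2C
    have hDne : ((2:R)*2)*((z*w-w*z)*(z*w-w*z)) ≠ 0 := fun h => by
      rcases hnzd _ _ h with h|h
      · rcases hnzd _ _ h with h|h <;> exact h2 h
      · exact hc2ne h
    have hDz : (((2:R)*2)*((z*w-w*z)*(z*w-w*z))) * (z*z) ∈ Subring.center R := by
      rw [← e3]; exact h4
    obtain ⟨t, htC, htD⟩ := hinv _ hD hDne
    have hzz : z*z = t * ((((2:R)*2)*((z*w-w*z)*(z*w-w*z))) * (z*z)) := by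
      rw [← mul_assoc, cswap htC, htD, one_mul]
    rw [hzz]; exact mul_mem htC hDz
  -- a := [x,y] is not central
  have ha0 : x*y - y*x ≠ 0 := sub_ne_zero.mpr hxy
  have haNC : (x*y - y*x) ∉ Subring.center R := by
    intro hacen
    have hx2 := hsquare x y ha0 hacen
    have hyxe : y*x - x*y = -(x*y - y*x) := by noncomm_ring
    have hy2 := hsquare y x (by rw [hyxe]; exact neg_ne_zero.mpr ha0)
      (by rw [hyxe]; exact neg_mem hacen)
    have hxye : (x+y)*y - y*(x+y) = x*y - y*x := by noncomm_ring
    have hxy2 := hsquare (x+y) y (by rw [hxye]; exact ha0) (by rw [hxye]; exact hacen)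
    have hsum : x*y + y*x ∈ Subring.center R := by
      rw [show x*y + y*x = (x+y)*(x+y) - x*x - y*y from by noncomm_ring]
      exact sub_mem (sub_mem hxy2 hx2) hy2
    have h2xy : (2:R)*(x*y) ∈ Subring.center R := by
      rw [show (2:R)*(x*y) = (x*y + y*x) + (x*y - y*x) from by noncomm_ring]
      exact add_mem hsum hacen
    obtain ⟨s, hsC, hs2⟩ := hinv 2 h2C h2
    have hxyeq : x*y = s*((2:R)*(x*y)) := by
      rw [← mul_assoc, cswap hsC, hs2, one_mul]
    have hxyC : x*y ∈ Subring.center R := by rw [hxyeq]; exact mul_mem hsC h2xy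
    have hxa : x*(x*y - y*x) = 0 := by
      rw [show x*(x*y - y*x) = x*(x*y) - (x*y)*x from by noncomm_ring, cswap hxyC x]
      exact sub_self _
    rcases hnzd _ _ hxa with h|h
    · rw [h] at hxy; simp at hxy
    · exact ha0 h
  obtain ⟨r, hra⟩ : ∃ r : R, ¬ (r * (x*y-y*x) = (x*y-y*x) * r) := by
    by_contra hcon; push_neg at hcon
    exact haNC (Subring.mem_center_iff.mpr hcon)
  have haaC : (x*y-y*x)*(x*y-y*x) ∈ Subring.center R := by
    have := hsq x y; rwa [pow_two] at this
  set a := x*y - y*x with ha_def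
  have hb0 : a*r - r*a ≠ 0 := sub_ne_zero.mpr (fun h => hra h.symm)
  have hbbC : (a*r - r*a)*(a*r - r*a) ∈ Subring.center R := by
    have := hsq a r; rwa [pow_two] at this
  set b := a*r - r*a with hb_def
  have habba : a*b + b*a = 0 := by
    rw [hb_def,
      show a*(a*r-r*a) + (a*r-r*a)*a = (a*a)*r - r*(a*a) from by noncomm_ring,
      cswap haaC r]
    exact sub_self _
  have hba : b*a = -(a*b) := by
    have := neg_eq_of_add_eq_zero_right habba
    rw [← this]
  have hab : a*b = -(b*a) := by rw [hba, neg_neg]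
  -- independence
  have hindep : ∀ c0 c1 c2 c3 : R, c0 ∈ Subring.center R → c1 ∈ Subring.center R →
      c2 ∈ Subring.center R → c3 ∈ Subring.center R →
      c0 + c1*a + c2*b + c3*(a*b) = 0 →
      c0 = 0 ∧ c1 = 0 ∧ c2 = 0 ∧ c3 = 0 := by
    intro c0 c1 c2 c3 k0 k1 k2 k3 hz
    have step1 : ((2*c2)*a + (2*c3)*(a*a))*b = 0 := by
      have eL : ((2*c2)*a + (2*c3)*(a*a))*b
          = a*(c0 + c1*a + c2*b + c3*(a*b)) - (c0 + c1*a + c2*b + c3*(a*b))*a := by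
        rw [show a*(c0 + c1*a + c2*b + c3*(a*b)) - (c0 + c1*a + c2*b + c3*(a*b))*a
            = (a*c0 - c0*a) + ((a*c1)*a - (c1*a)*a) + ((a*c2)*b - c2*(b*a))
              + ((a*c3)*(a*b) - c3*((a*b)*a)) from by noncomm_ring,
          ← cswap k0 a, ← cswap k1 a, ← cswap k2 a, ← cswap k3 a, hba,
          show (a*b)*a = -((a*a)*b) from by
            rw [mul_assoc a b a, hba, mul_neg, ← mul_assoc]]
        noncomm_ring
      rw [eL, hz]; simp
    have hX0 : (2*c2)*a + (2*c3)*(a*a) = 0 := by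
      rcases hnzd _ _ step1 with h|h
      · exact h
      · exact absurd h hb0
    have step2 : c2 + c3*a = 0 := by
      have e : ((2:R)*(c2 + c3*a))*a = (2*c2)*a + (2*c3)*(a*a) := by noncomm_ring
      rcases hnzd ((2:R)*(c2+c3*a)) a (by rw [e, hX0]) with h|h
      · rcases hnzd _ _ h with h'|h'
        · exact absurd h' h2
        · exact h'
      · exact absurd h ha0
    have hc3 : c3 = 0 := by
      by_contra hc3ne
      obtain ⟨t, htC, htc3⟩ := hinv c3 k3 hc3ne
      have hc3a : c3*a = -c2 := by
        have := neg_eq_of_add_eq_zero_right step2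
        rw [← this]
      have : a = -(t*c2) := by
        calc a = (c3*t)*a := by rw [htc3, one_mul]
          _ = (t*c3)*a := by rw [cswap htC c3]
          _ = t*(c3*a) := by rw [mul_assoc]
          _ = -(t*c2) := by rw [hc3a, mul_neg]
      exact haNC (this ▸ neg_mem (mul_mem htC k2))
    have hc2 : c2 = 0 := by
      have := step2; rw [hc3, zero_mul, add_zero] at this; exact this
    have hz01 : c0 + c1*a = 0 := by
      have := hz; rw [hc2, hc3, zero_mul, zero_mul, add_zero, add_zero] at this
      exact this
    have hc1 : c1 = 0 := by
      have hE : c1*(a*r - r*a) = (c0+c1*a)*r - r*(c0+c1*a) := by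
        rw [show (c0+c1*a)*r - r*(c0+c1*a)
            = (c0*r - r*c0) + ((c1*a)*r - (r*c1)*a) from by noncomm_ring,
          cswap k0 r, ← cswap k1 r]
        noncomm_ring
      have h0' : c1*(a*r - r*a) = 0 := by rw [hE, hz01, zero_mul, mul_zero, sub_self]
      rw [← hb_def] at h0'
      rcases hnzd _ _ h0' with h|h
      · exact h
      · exact absurd h hb0
    have hc0 : c0 = 0 := by
      have := hz01; rw [hc1, zero_mul, add_zero] at this; exact this
    exact ⟨hc0, hc1, hc2, hc3⟩
  refine ⟨a, b, ha0, hb0, hab, ?_, ?_, ?_, ?_, hindep, ?_⟩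
  · rw [pow_two]; exact haaC
  · rw [pow_two]; exact hbbC
  · rw [pow_two]; intro h; rcases hnzd _ _ h with h|h <;> exact ha0 h
  · rw [pow_two]; intro h; rcases hnzd _ _ h with h|h <;> exact hb0 h
  have hbba : (b*b)*a = a*(b*b) := cswap hbbC a
  refine ⟨?_, ?_, ?_⟩
  · -- closure
    rintro q ⟨c0, c1, c2, c3, k0, k1, k2, k3, rfl⟩ q' ⟨d0, d1, d2, d3, l0, l1, l2, l3, rfl⟩
    exact ⟨_, _, _, _,
      sub_mem (add_mem (add_mem (mul_mem k0 l0) (mul_mem (mul_mem k1 l1) haaC))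
        (mul_mem (mul_mem k2 l2) hbbC)) (mul_mem (mul_mem k3 l3) (mul_mem haaC hbbC)),
      add_mem (sub_mem (add_mem (mul_mem k0 l1) (mul_mem k1 l0))
        (mul_mem (mul_mem k2 l3) hbbC)) (mul_mem (mul_mem k3 l2) hbbC),
      sub_mem (add_mem (add_mem (mul_mem k0 l2) (mul_mem (mul_mem k1 l3) haaC))
        (mul_mem k2 l0)) (mul_mem (mul_mem k3 l1) haaC),
      add_mem (sub_mem (add_mem (mul_mem k0 l3) (mul_mem k1 l2)) (mul_mem k2 l1))
        (mul_mem k3 l0),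
      quatMul a b hba hbba c0 c1 c2 c3 d0 d1 d2 d3
        (fun s => cswap l0 s) (fun s => cswap l1 s) (fun s => cswap l2 s) (fun s => cswap l3 s)⟩
  · exact ⟨1, 0, 0, 0, one_mem _, zero_mem _, zero_mem _, zero_mem _, by simp⟩
  · -- inverses
    rintro q ⟨c0, c1, c2, c3, k0, k1, k2, k3, rfl⟩ hqne
    have hE1 : c0*(-c1) + c1*c0 - (c2*(-c3))*(b*b) + (c3*(-c2))*(b*b) = 0 := by
      rw [show c0*(-c1) + c1*c0 - (c2*(-c3))*(b*b) + (c3*(-c2))*(b*b)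
          = (c1*c0 - c0*c1) + ((c2*c3)*(b*b) - (c3*c2)*(b*b)) from by noncomm_ring,
        cswap k1 c0, cswap k3 c2]
      noncomm_ring
    have hE2 : c0*(-c2) + (c1*(-c3))*(a*a) + c2*c0 - (c3*(-c1))*(a*a) = 0 := by
      rw [show c0*(-c2) + (c1*(-c3))*(a*a) + c2*c0 - (c3*(-c1))*(a*a)
          = (c2*c0 - c0*c2) + ((c3*c1)*(a*a) - (c1*c3)*(a*a)) from by noncomm_ring,
        cswap k2 c0, cswap k3 c1]
      noncomm_ring
    have hE3 : c0*(-c3) + c1*(-c2) - c2*(-c1) + c3*c0 = 0 := by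
      rw [show c0*(-c3) + c1*(-c2) - c2*(-c1) + c3*c0
          = (c3*c0 - c0*c3) + (c2*c1 - c1*c2) from by noncomm_ring,
        cswap k3 c0, cswap k2 c1]
      noncomm_ring
    have hNC : c0*c0 + (c1*(-c1))*(a*a) + (c2*(-c2))*(b*b) - (c3*(-c3))*((a*a)*(b*b))
        ∈ Subring.center R :=
      sub_mem (add_mem (add_mem (mul_mem k0 k0) (mul_mem (mul_mem k1 (neg_mem k1)) haaC))
        (mul_mem (mul_mem k2 (neg_mem k2)) hbbC))
        (mul_mem (mul_mem k3 (neg_mem k3)) (mul_mem haaC hbbC))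
    have hqqb : (c0 + c1*a + c2*b + c3*(a*b)) * (c0 + (-c1)*a + (-c2)*b + (-c3)*(a*b))
        = c0*c0 + (c1*(-c1))*(a*a) + (c2*(-c2))*(b*b) - (c3*(-c3))*((a*a)*(b*b)) := by
      rw [quatMul a b hba hbba c0 c1 c2 c3 c0 (-c1) (-c2) (-c3)
        (fun s => cswap k0 s) (fun s => cswap (neg_mem k1) s)
        (fun s => cswap (neg_mem k2) s) (fun s => cswap (neg_mem k3) s),
        hE1, hE2, hE3]
      simp
    have hF1 : c0*c1 + (-c1)*c0 - ((-c2)*c3)*(b*b) + ((-c3)*c2)*(b*b) = 0 := by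
      rw [show c0*c1 + (-c1)*c0 - ((-c2)*c3)*(b*b) + ((-c3)*c2)*(b*b)
          = (c0*c1 - c1*c0) + ((c2*c3)*(b*b) - (c3*c2)*(b*b)) from by noncomm_ring,
        cswap k1 c0, cswap k3 c2]
      noncomm_ring
    have hF2 : c0*c2 + ((-c1)*c3)*(a*a) + (-c2)*c0 - ((-c3)*c1)*(a*a) = 0 := by
      rw [show c0*c2 + ((-c1)*c3)*(a*a) + (-c2)*c0 - ((-c3)*c1)*(a*a)
          = (c0*c2 - c2*c0) + ((c3*c1)*(a*a) - (c1*c3)*(a*a)) from by noncomm_ring,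
        cswap k2 c0, cswap k3 c1]
      noncomm_ring
    have hF3 : c0*c3 + (-c1)*c2 - (-c2)*c1 + (-c3)*c0 = 0 := by
      rw [show c0*c3 + (-c1)*c2 - (-c2)*c1 + (-c3)*c0
          = (c0*c3 - c3*c0) + (c2*c1 - c1*c2) from by noncomm_ring,
        cswap k3 c0, cswap k2 c1]
      noncomm_ring
    have hqbq : (c0 + (-c1)*a + (-c2)*b + (-c3)*(a*b)) * (c0 + c1*a + c2*b + c3*(a*b))
        = c0*c0 + (c1*(-c1))*(a*a) + (c2*(-c2))*(b*b) - (c3*(-c3))*((a*a)*(b*b)) := by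
      rw [quatMul a b hba hbba c0 (-c1) (-c2) (-c3) c0 c1 c2 c3
        (fun s => cswap k0 s) (fun s => cswap k1 s) (fun s => cswap k2 s)
        (fun s => cswap k3 s),
        hF1, hF2, hF3]
      rw [show c0*c0 + ((-c1)*c1)*(a*a) + ((-c2)*c2)*(b*b) - ((-c3)*c3)*((a*a)*(b*b))
          = c0*c0 + (c1*(-c1))*(a*a) + (c2*(-c2))*(b*b) - (c3*(-c3))*((a*a)*(b*b)) from by
        noncomm_ring]
      simp
    have hNne : c0*c0 + (c1*(-c1))*(a*a) + (c2*(-c2))*(b*b) - (c3*(-c3))*((a*a)*(b*b)) ≠ 0 := by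
      intro hN0
      have hprod0 : (c0 + c1*a + c2*b + c3*(a*b)) * (c0 + (-c1)*a + (-c2)*b + (-c3)*(a*b)) = 0 := by
        rw [hqqb, hN0]
      rcases hnzd _ _ hprod0 with h|h
      · exact hqne h
      · obtain ⟨e0, e1, e2, e3⟩ := hindep c0 (-c1) (-c2) (-c3) k0 (neg_mem k1)
          (neg_mem k2) (neg_mem k3) h
        apply hqne
        rw [e0, neg_eq_zero.mp e1, neg_eq_zero.mp e2, neg_eq_zero.mp e3]
        simp
    obtain ⟨t, htC, htN⟩ := hinv _ hNC hNne
    refine ⟨t*c0 + (t*(-c1))*a + (t*(-c2))*b + (t*(-c3))*(a*b),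
      ⟨t*c0, t*(-c1), t*(-c2), t*(-c3), mul_mem htC k0, mul_mem htC (neg_mem k1),
        mul_mem htC (neg_mem k2), mul_mem htC (neg_mem k3), rfl⟩, ?_, ?_⟩
    · rw [show t*c0 + (t*(-c1))*a + (t*(-c2))*b + (t*(-c3))*(a*b)
          = t*(c0 + (-c1)*a + (-c2)*b + (-c3)*(a*b)) from by noncomm_ring,
        ← mul_assoc, ← cswap htC, mul_assoc, hqqb, cswap htC, htN]
    · rw [show t*c0 + (t*(-c1))*a + (t*(-c2))*b + (t*(-c3))*(a*b)
          = t*(c0 + (-c1)*a + (-c2)*b + (-c3)*(a*b)) from by noncomm_ring,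
        mul_assoc, hqbq, cswap htC, htN]
end

section
/- Let R be a noncommutative associative ring with 1 of characteristic ≠ 2 whose center C is a field, with no zero divisors, such that (x,y)^2 ∈ C for all x,y and nonzero commutators are non-zero-divisors. If a, b ∈ R are nonzero with a*b = -b*a, a^2, b^2 ∈ C, and Q = C + Ca + Cb + Cab, then R = Q (there is no element m ∉ Q anticommuting with a, b, and a*b, since such m would give 2·m·(a*b) = 0). -/
/-- If `a, b ∈ R` are nonzero with `a*b = -b*a` and `a^2, b^2 ∈ C`, then
`R = Q = C + C·a + C·b + C·(a*b)`. -/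
theorem stmt_18 {R : Type*} [Ring R]
    (hnc : ∃ x y : R, x * y ≠ y * x)
    (h2 : (2 : R) ≠ 0)
    (hC : IsField (Subring.center R))
    (hnzd : ∀ x y : R, x * y = 0 → x = 0 ∨ y = 0)
    (hsq : ∀ x y : R, (x * y - y * x) ^ 2 ∈ Subring.center R)
    (hcomm : ∀ x y : R, x * y - y * x ≠ 0 → ∀ r : R, r ≠ 0 →
      (x * y - y * x) * r ≠ 0 ∧ r * (x * y - y * x) ≠ 0)
    (a b : R) (ha : a ≠ 0) (hb : b ≠ 0) (hab : a * b = -(b * a))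
    (hasq : a ^ 2 ∈ Subring.center R) (hbsq : b ^ 2 ∈ Subring.center R) :
    ∀ z : R, ∃ c₀ c₁ c₂ c₃ : R, c₀ ∈ Subring.center R ∧
      c₁ ∈ Subring.center R ∧ c₂ ∈ Subring.center R ∧ c₃ ∈ Subring.center R ∧
      z = c₀ + c₁ * a + c₂ * b + c₃ * (a * b) := by
  have cen : ∀ {c : R}, c ∈ Subring.center R → ∀ x : R, x * c = c * x :=
    fun hc x => Subring.mem_center_iff.mp hc x
  have sw : ∀ {c : R}, c ∈ Subring.center R → ∀ x y : R, x * (c * y) = c * (x * y) :=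
    fun {c} hc x y => by rw [← mul_assoc, cen hc x, mul_assoc]
  have hinv : ∀ c : R, c ∈ Subring.center R → c ≠ 0 →
      ∃ d : R, d ∈ Subring.center R ∧ c * d = 1 := by
    intro c hc h0
    obtain ⟨d, hd⟩ := hC.mul_inv_cancel (a := (⟨c, hc⟩ : Subring.center R))
      (fun h => h0 (congrArg Subtype.val h))
    exact ⟨d.1, d.2, congrArg Subtype.val hd⟩
  have nz : ∀ x y : R, x ≠ 0 → y ≠ 0 → x * y ≠ 0 := by
    intro x y hx hy h
    rcases hnzd x y h with h' | h'
    exacts [hx h', hy h']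
  have hba : b * a = -(a * b) := by rw [hab, neg_neg]
  have hαc : a * a ∈ Subring.center R := by rw [← pow_two]; exact hasq
  have hβc : b * b ∈ Subring.center R := by rw [← pow_two]; exact hbsq
  have h2c : (2 : R) ∈ Subring.center R :=
    Subring.mem_center_iff.mpr (fun g => by rw [mul_two, two_mul])
  have ha2 : a * a ≠ 0 := nz a a ha ha
  have hb2 : b * b ≠ 0 := nz b b hb hb
  obtain ⟨ι, hιc, h2ι⟩ := hinv 2 h2c h2
  have hι2 : ι * 2 = 1 := (cen hιc 2).symm.trans h2ι
  obtain ⟨α', hα'c, hαα'⟩ := hinv (a * a) hαc ha2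
  have hα'α : α' * (a * a) = 1 := (cen hα'c (a * a)).symm.trans hαα'
  obtain ⟨β', hβ'c, hββ'⟩ := hinv (b * b) hβc hb2
  have hβ'β : β' * (b * b) = 1 := (cen hβ'c (b * b)).symm.trans hββ'
  have Lba : ∀ x : R, b * (a * x) = -(a * (b * x)) := by
    intro x; rw [← mul_assoc, hba, neg_mul, mul_assoc]
  have hdd : (a * b) * (a * b) = -((a * a) * (b * b)) := by
    rw [mul_assoc, ← mul_assoc b a b, hba, neg_mul, mul_neg, mul_assoc a b b,
      ← mul_assoc a a (b * b)]
  -- centralizer of {a, b} has central squares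
  have K0 : ∀ s : R, s * a = a * s → s * b = b * s → s * s ∈ Subring.center R := by
    intro s hA hB
    have hsd : s * (a * b) = (a * b) * s := by
      rw [← mul_assoc, hA, mul_assoc, hB, ← mul_assoc]
    have key : (s * a) * b - b * (s * a) = 2 * (s * (a * b)) := by
      rw [mul_assoc, ← mul_assoc b s a, ← hB, mul_assoc s b a, hba, mul_neg,
        sub_neg_eq_add, two_mul]
    have h := hsq (s * a) b
    rw [key] at h
    have hCc : (a * a) * (b * b) ∈ Subring.center R := Subring.mul_mem _ hαc hβc
    have hw : (2 * (s * (a * b))) ^ 2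
        = -((2 * (2 * ((a * a) * (b * b)))) * (s * s)) := by
      rw [pow_two]
      calc (2 * (s * (a * b))) * (2 * (s * (a * b)))
          = 2 * (2 * ((s * (a * b)) * (s * (a * b)))) := by
            rw [sw h2c (2 * (s * (a * b))) (s * (a * b)),
              mul_assoc 2 (s * (a * b)) (s * (a * b))]
        _ = 2 * (2 * (s * (s * ((a * b) * (a * b))))) := by
            rw [mul_assoc s (a * b) (s * (a * b)), ← mul_assoc (a * b) s (a * b), ← hsd,
              mul_assoc s (a * b) (a * b)]
        _ = -((2 * (2 * ((a * a) * (b * b)))) * (s * s)) := by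
            rw [hdd, mul_neg, mul_neg, mul_neg, mul_neg, cen hCc s, sw hCc s s,
              mul_assoc 2 (2 * ((a * a) * (b * b))) (s * s),
              mul_assoc 2 ((a * a) * (b * b)) (s * s)]
    rw [hw] at h
    have h' := Subring.neg_mem _ h
    rw [neg_neg] at h'
    obtain ⟨u, huc, hmu⟩ := hinv (2 * (2 * ((a * a) * (b * b))))
      (Subring.mul_mem _ h2c (Subring.mul_mem _ h2c hCc))
      (nz _ _ h2 (nz _ _ h2 (nz _ _ ha2 hb2)))
    have e : s * s = u * ((2 * (2 * ((a * a) * (b * b)))) * (s * s)) := by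
      rw [← mul_assoc, ← cen huc (2 * (2 * ((a * a) * (b * b)))), hmu, one_mul]
    rw [e]
    exact Subring.mul_mem _ huc h'
  -- the centralizer of {a, b} is the center
  have K1 : ∀ s : R, s * a = a * s → s * b = b * s → s ∈ Subring.center R := by
    intro s hA hB
    have k0 := K0 s hA hB
    have hA1 : (s + 1) * a = a * (s + 1) := by rw [add_mul, one_mul, mul_add, mul_one, hA]
    have hB1 : (s + 1) * b = b * (s + 1) := by rw [add_mul, one_mul, mul_add, mul_one, hB]
    have k1 := K0 (s + 1) hA1 hB1
    have e : 2 * s = (s + 1) * (s + 1) - s * s - 1 := by noncomm_ring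
    have h2s : 2 * s ∈ Subring.center R := by
      rw [e]; exact Subring.sub_mem _ (Subring.sub_mem _ k1 k0) (Subring.one_mem _)
    have e2 : s = ι * (2 * s) := by rw [← mul_assoc, hι2, one_mul]
    rw [e2]
    exact Subring.mul_mem _ hιc h2s
  -- inverses of a, b, a*b
  set ai := α' * a with hai
  set bi := β' * b with hbi
  set di := -(α' * (β' * (a * b))) with hdi
  have haia : ai * a = 1 := by rw [hai, mul_assoc, hα'α]
  have haai : a * ai = 1 := by rw [hai, sw hα'c a a, hα'α]
  have hbib : bi * b = 1 := by rw [hbi, mul_assoc, hβ'β]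
  have hbbi : b * bi = 1 := by rw [hbi, sw hβ'c b b, hβ'β]
  have gaa : (ai * ai) * (a * a) = 1 := by
    rw [mul_assoc, ← mul_assoc ai a a, haia, one_mul, haia]
  have gbb : (bi * bi) * (b * b) = 1 := by
    rw [mul_assoc, ← mul_assoc bi b b, hbib, one_mul, hbib]
  have gbiai : bi * ai = di := by
    rw [hbi, hai, hdi, mul_assoc, sw hα'c b a, sw hα'c β' (b * a), hba, mul_neg, mul_neg]
  have gaibi : ai * bi = -di := by
    rw [hai, hbi, hdi, neg_neg, mul_assoc, sw hβ'c a b]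
  have tdi : di * (a * b) = 1 := by
    rw [hdi, neg_mul, mul_assoc, mul_assoc, hdd, mul_neg, mul_neg, neg_neg,
      sw hαc β' (b * b), hβ'β, mul_one, hα'α]
  have Iab : ai * b = -(b * ai) := by
    rw [hai, mul_assoc, sw hα'c b a, hba, mul_neg, neg_neg]
  have Iba : bi * a = -(a * bi) := by
    rw [hbi, mul_assoc, sw hβ'c a b, hba, mul_neg]
  have Ida : di * a = -(a * di) := by
    rw [hdi, neg_mul, mul_neg, neg_neg, mul_assoc, mul_assoc, mul_assoc a b a, hba,
      mul_neg, mul_neg, mul_neg, neg_neg, sw hα'c a (β' * (a * b)), sw hβ'c a (a * b)]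
  have Idb : di * b = -(b * di) := by
    rw [hdi, neg_mul, mul_neg, neg_neg, mul_assoc, mul_assoc, mul_assoc a b b,
      sw hα'c b (β' * (a * b)), sw hβ'c b (a * b), ← mul_assoc b a b, hba, neg_mul,
      mul_neg, mul_neg, mul_assoc a b b]
  -- the conjugation identities
  have A1 : ∀ x : R, a * ((a * (x * ai)) * ai) = x := by
    intro x
    have e : a * ((a * (x * ai)) * ai) = (a * a) * (x * (ai * ai)) := by
      simp only [mul_assoc]
    rw [e, ← cen hαc (x * (ai * ai)), mul_assoc, gaa, mul_one]
  have A2 : ∀ x : R, b * ((b * (x * bi)) * bi) = x := by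
    intro x
    have e : b * ((b * (x * bi)) * bi) = (b * b) * (x * (bi * bi)) := by
      simp only [mul_assoc]
    rw [e, ← cen hβc (x * (bi * bi)), mul_assoc, gbb, mul_one]
  have A3 : ∀ x : R, a * ((b * (x * bi)) * ai) = a * (b * (x * di)) := by
    intro x
    simp only [mul_assoc]
    rw [gbiai]
  have A4 : ∀ x : R, b * ((a * (x * ai)) * bi) = a * (b * (x * di)) := by
    intro x
    simp only [mul_assoc]
    rw [gaibi]
    simp only [mul_neg]
    rw [Lba, neg_neg]
  have A6 : ∀ x : R, a * ((a * (b * (x * di))) * ai) = b * (x * bi) := by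
    intro x; rw [← A3, A1]
  have A7 : ∀ x : R, b * ((a * (b * (x * di))) * bi) = a * (x * ai) := by
    intro x; rw [← A4, A2]
  -- from conjugation facts to (anti)commutation
  have comm_of_fixa : ∀ w : R, a * (w * ai) = w → a * w = w * a := by
    intro w h
    have h2' : (a * (w * ai)) * a = w * a := by rw [h]
    rwa [mul_assoc, mul_assoc, haia, mul_one] at h2'
  have anti_of_nega : ∀ w : R, a * (w * ai) = -w → a * w = -(w * a) := by
    intro w h
    have h2' : (a * (w * ai)) * a = (-w) * a := by rw [h]
    rwa [mul_assoc, mul_assoc, haia, mul_one, neg_mul] at h2'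
  have comm_of_fixb : ∀ w : R, b * (w * bi) = w → b * w = w * b := by
    intro w h
    have h2' : (b * (w * bi)) * b = w * b := by rw [h]
    rwa [mul_assoc, mul_assoc, hbib, mul_one] at h2'
  have anti_of_negb : ∀ w : R, b * (w * bi) = -w → b * w = -(w * b) := by
    intro w h
    have h2' : (b * (w * bi)) * b = (-w) * b := by rw [h]
    rwa [mul_assoc, mul_assoc, hbib, mul_one, neg_mul] at h2'
  have hι2x : ∀ x : R, ι * (2 * x) = x := by
    intro x; rw [← mul_assoc, hι2, one_mul]
  -- main decomposition
  intro z
  set pa := a * (z * ai) with hpa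
  set pb := b * (z * bi) with hpb
  set pd := a * (b * (z * di)) with hpd
  set W0 := z + pa + pb + pd with hW0
  set W1 := z + pa - pb - pd with hW1
  set W2 := z - pa + pb - pd with hW2
  set W3 := z - pa - pb + pd with hW3
  have fix0a : a * (W0 * ai) = W0 := by
    rw [hW0, hpa, hpb, hpd]
    simp only [add_mul, mul_add, A1, A3, A6]
    abel
  have fix0b : b * (W0 * bi) = W0 := by
    rw [hW0, hpa, hpb, hpd]
    simp only [add_mul, mul_add, A2, A4, A7]
    abel
  have fix1a : a * (W1 * ai) = W1 := by
    rw [hW1, hpa, hpb, hpd]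
    simp only [add_mul, sub_mul, mul_add, mul_sub, A1, A3, A6]
    abel
  have neg1b : b * (W1 * bi) = -W1 := by
    rw [hW1, hpa, hpb, hpd]
    simp only [add_mul, sub_mul, mul_add, mul_sub, A2, A4, A7]
    abel
  have neg2a : a * (W2 * ai) = -W2 := by
    rw [hW2, hpa, hpb, hpd]
    simp only [add_mul, sub_mul, mul_add, mul_sub, A1, A3, A6]
    abel
  have fix2b : b * (W2 * bi) = W2 := by
    rw [hW2, hpa, hpb, hpd]
    simp only [add_mul, sub_mul, mul_add, mul_sub, A2, A4, A7]
    abel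
  have neg3a : a * (W3 * ai) = -W3 := by
    rw [hW3, hpa, hpb, hpd]
    simp only [add_mul, sub_mul, mul_add, mul_sub, A1, A3, A6]
    abel
  have neg3b : b * (W3 * bi) = -W3 := by
    rw [hW3, hpa, hpb, hpd]
    simp only [add_mul, sub_mul, mul_add, mul_sub, A2, A4, A7]
    abel
  have h0a := comm_of_fixa W0 fix0a
  have h0b := comm_of_fixb W0 fix0b
  have h1a := comm_of_fixa W1 fix1a
  have h1b := anti_of_negb W1 neg1b
  have h2a := anti_of_nega W2 neg2a
  have h2b := comm_of_fixb W2 fix2b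
  have h3a := anti_of_nega W3 neg3a
  have h3b := anti_of_negb W3 neg3b
  have hW0c : W0 ∈ Subring.center R := K1 W0 h0a.symm h0b.symm
  -- component 1
  have e1 : (W1 * ai) * a = W1 := by rw [mul_assoc, haia, mul_one]
  have f1 : a * (W1 * ai) = W1 := by rw [← mul_assoc, h1a, mul_assoc, haai, mul_one]
  have g1b : (W1 * ai) * b = b * (W1 * ai) := by
    rw [mul_assoc, Iab, mul_neg, ← mul_assoc, ← neg_mul, ← h1b, mul_assoc]
  have hc1 : W1 * ai ∈ Subring.center R := K1 _ (e1.trans f1.symm) g1b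
  -- component 2
  have e2' : (W2 * bi) * b = W2 := by rw [mul_assoc, hbib, mul_one]
  have f2 : b * (W2 * bi) = W2 := by rw [← mul_assoc, h2b, mul_assoc, hbbi, mul_one]
  have g2a : (W2 * bi) * a = a * (W2 * bi) := by
    rw [mul_assoc, Iba, mul_neg, ← mul_assoc, ← neg_mul, ← h2a, mul_assoc]
  have hc2 : W2 * bi ∈ Subring.center R := K1 _ g2a (e2'.trans f2.symm)
  -- component 3
  have g3a : (W3 * di) * a = a * (W3 * di) := by
    rw [mul_assoc, Ida, mul_neg, ← mul_assoc, ← neg_mul, ← h3a, mul_assoc]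
  have g3b : (W3 * di) * b = b * (W3 * di) := by
    rw [mul_assoc, Idb, mul_neg, ← mul_assoc, ← neg_mul, ← h3b, mul_assoc]
  have hc3 : W3 * di ∈ Subring.center R := K1 _ g3a g3b
  have e3 : (W3 * di) * (a * b) = W3 := by rw [mul_assoc, tdi, mul_one]
  -- assemble
  refine ⟨(ι * ι) * W0, (ι * ι) * (W1 * ai), (ι * ι) * (W2 * bi), (ι * ι) * (W3 * di),
    Subring.mul_mem _ (Subring.mul_mem _ hιc hιc) hW0c,
    Subring.mul_mem _ (Subring.mul_mem _ hιc hιc) hc1,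
    Subring.mul_mem _ (Subring.mul_mem _ hιc hιc) hc2,
    Subring.mul_mem _ (Subring.mul_mem _ hιc hιc) hc3, ?_⟩
  have t1 : ((ι * ι) * (W1 * ai)) * a = (ι * ι) * W1 := by rw [mul_assoc, e1]
  have t2 : ((ι * ι) * (W2 * bi)) * b = (ι * ι) * W2 := by rw [mul_assoc, e2']
  have t3 : ((ι * ι) * (W3 * di)) * (a * b) = (ι * ι) * W3 := by rw [mul_assoc, e3]
  rw [t1, t2, t3, ← mul_add, ← mul_add, ← mul_add]
  have hsum : W0 + W1 + W2 + W3 = 2 * (2 * z) := by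
    rw [hW0, hW1, hW2, hW3, two_mul, two_mul]
    abel
  rw [hsum, mul_assoc, hι2x, hι2x]
end
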